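/- An improving module has a common predecessor or a common successor: let M be a configuration over (V, E) and m ⊆ V a set with |m| ≥ 2 such that M ∪ {m} is a configuration and |R(M ∪ {m})| < |R(M)|. Then there exists a vertex v ∈ V with (v, u) ∈ E for every u ∈ m, or there exists a vertex v ∈ V with (u, v) ∈ E for every u ∈ m. -/

import Mathlib

/-!
A new module `m` can only change the representative edges if it occurs in some possible edge
`(m, n)` or `(n, m)` of `M ∪ {m}`. As `n` is nonempty, any vertex of `n` is then a common
successor, respectively a common predecessor, of the vertices of `m`.
-/

/-- A configuration over `(V, E)`: a family of nonempty subsets of `V` that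
contains every singleton and is laminar (any two members are nested or
disjoint). -/
def IsConfig {V : Type*} [Fintype V] [DecidableEq V] (M : Finset (Finset V)) : Prop :=
  (∀ m ∈ M, m.Nonempty) ∧ (∀ v : V, {v} ∈ M) ∧
    ∀ m ∈ M, ∀ n ∈ M, m ⊆ n ∨ n ⊆ m ∨ m ∩ n = ∅

/-- `p = (m, n)` is a possible edge of the configuration `M`:
`m, n ∈ M`, `m × n ⊆ E`, and `m = n` or `m ∩ n = ∅`. -/
def PossEdge {V : Type*} [DecidableEq V] (E : Set (V × V)) (M : Finset (Finset V))
    (p : Finset V × Finset V) : Prop :=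
  p.1 ∈ M ∧ p.2 ∈ M ∧ (∀ u ∈ p.1, ∀ v ∈ p.2, (u, v) ∈ E) ∧ (p.1 = p.2 ∨ p.1 ∩ p.2 = ∅)

/-- The possible edge `p` is dominated by some other possible edge `q`,
i.e. `q ≠ p`, `p.1 ⊆ q.1` and `p.2 ⊆ q.2`. -/
def Dominated {V : Type*} [DecidableEq V] (E : Set (V × V)) (M : Finset (Finset V))
    (p : Finset V × Finset V) : Prop :=
  ∃ q : Finset V × Finset V, PossEdge E M q ∧ q ≠ p ∧ p.1 ⊆ q.1 ∧ p.2 ⊆ q.2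

/-- The set `R(M)` of representative edges of the configuration `M`: the
possible edges not dominated by any other possible edge. -/
def RepEdges {V : Type*} [DecidableEq V] (E : Set (V × V)) (M : Finset (Finset V)) :
    Set (Finset V × Finset V) :=
  {p | PossEdge E M p ∧ ¬ Dominated E M p}

/-- A configuration `C` is optimal if it minimises the number of representative
edges among all configurations, and no proper subfamily of `C` that is itself a
configuration has the same number of representative edges. -/
def IsOptimal {V : Type*} [Fintype V] [DecidableEq V] (E : Set (V × V))
    (C : Finset (Finset V)) : Prop :=
  IsConfig C ∧ (∀ C' : Finset (Finset V), IsConfig C' → (RepEdges E C).ncard ≤ (RepEdges E C').ncard) ∧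
    ∀ D ⊆ C, D ≠ C → IsConfig D → (RepEdges E D).ncard ≠ (RepEdges E C).ncard

section RepEdges

variable {V : Type*} [DecidableEq V] {E : Set (V × V)}

theorem repEdges_congr {M N : Finset (Finset V)} (h : ∀ p, PossEdge E M p ↔ PossEdge E N p) :
    RepEdges E M = RepEdges E N := by
  ext p
  simp only [RepEdges, Dominated, Set.mem_ofPred_eq, h]

theorem PossEdge.mono {M N : Finset (Finset V)} {p : Finset V × Finset V} (hMN : M ⊆ N)
    (hp : PossEdge E M p) : PossEdge E N p :=
  ⟨hMN hp.1, hMN hp.2.1, hp.2.2⟩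

theorem PossEdge.of_insert {M : Finset (Finset V)} {m : Finset V} {p : Finset V × Finset V}
    (hp : PossEdge E (insert m M) p) (h1 : p.1 ≠ m) (h2 : p.2 ≠ m) : PossEdge E M p :=
  ⟨(Finset.mem_insert.mp hp.1).resolve_left h1, (Finset.mem_insert.mp hp.2.1).resolve_left h2,
    hp.2.2⟩

theorem exists_possEdge_insert_of_repEdges_ne {M : Finset (Finset V)} {m : Finset V}
    (h : RepEdges E (insert m M) ≠ RepEdges E M) :
    ∃ p, PossEdge E (insert m M) p ∧ (p.1 = m ∨ p.2 = m) := by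
  contrapose! h
  exact repEdges_congr fun p =>
    ⟨fun hp => hp.of_insert (h p hp).1 (h p hp).2, PossEdge.mono (Finset.subset_insert m M)⟩

theorem PossEdge.exists_succ {M : Finset (Finset V)} {p : Finset V × Finset V}
    (hp : PossEdge E M p) (hne : p.2.Nonempty) : ∃ v, ∀ u ∈ p.1, (u, v) ∈ E :=
  let ⟨v, hv⟩ := hne
  ⟨v, fun u hu => hp.2.2.1 u hu v hv⟩

theorem PossEdge.exists_pred {M : Finset (Finset V)} {p : Finset V × Finset V}
    (hp : PossEdge E M p) (hne : p.1.Nonempty) : ∃ v, ∀ u ∈ p.2, (v, u) ∈ E :=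
  let ⟨v, hv⟩ := hne
  ⟨v, fun u hu => hp.2.2.1 v hv u hu⟩

end RepEdges

theorem statement16_general {V : Type*} [Fintype V] [DecidableEq V] (E : Set (V × V))
    (M : Finset (Finset V))
    (m : Finset V) (hM' : IsConfig (insert m M))
    (himp : (RepEdges E (insert m M)).ncard < (RepEdges E M).ncard) :
    (∃ v : V, ∀ u ∈ m, (v, u) ∈ E) ∨ (∃ v : V, ∀ u ∈ m, (u, v) ∈ E) := by
  obtain ⟨p, hp, rfl | rfl⟩ :=
    exists_possEdge_insert_of_repEdges_ne fun h => himp.ne (congrArg _ h)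
  · exact Or.inr (hp.exists_succ (hM'.1 _ hp.2.1))
  · exact Or.inl (hp.exists_pred (hM'.1 _ hp.1))

/-- An improving module has a common predecessor or a common
successor: let `M` be a configuration over `(V, E)` and `m ⊆ V` a set with
`|m| ≥ 2` such that `M ∪ {m}` is a configuration and `|R(M ∪ {m})| < |R(M)|`.
Then there exists a vertex `v ∈ V` with `(v, u) ∈ E` for every `u ∈ m`, or
there exists a vertex `v ∈ V` with `(u, v) ∈ E` for every `u ∈ m`. -/
theorem statement16 {V : Type*} [Fintype V] [DecidableEq V] (E : Set (V × V))
    (M : Finset (Finset V)) (hM : IsConfig M)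
    (m : Finset V) (hm : 2 ≤ m.card) (hM' : IsConfig (insert m M))
    (himp : (RepEdges E (insert m M)).ncard < (RepEdges E M).ncard) :
    (∃ v : V, ∀ u ∈ m, (v, u) ∈ E) ∨ (∃ v : V, ∀ u ∈ m, (u, v) ∈ E) :=
  statement16_general E M m hM' himp
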